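/- arXiv:2511.01793 — 4 statements merged into one kernel-verified Lean document; each statement's English description precedes it below -/
import Mathlib

section
/- For all vectors v and v' in ℂ^n, ‖v − R(v)‖₂ ≤ ‖v − R(v')‖₂. In words: replacing the phases in the revised exit wave by the phases computed from any other point v' can only increase the distance, so the quadratic surrogate built from the revised exit wave at the current iterate majorizes the exit-wave misfit. -/
/-!
Since `F` is an isometry, `‖v - R w‖ = ‖F v - F (R w)‖`, and the `r`-th entry of `F (R w)` lies on
the circle of radius `√(d r)`. Entrywise, the point of that circle closest to `(F v) r` is the one
with the phase of `(F v) r`, which is exactly the entry of `F (R v)`.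
-/

open Complex

lemma Complex.norm_sub_mul_exp_arg_le {z w : ℂ} {s : ℝ} (hw : ‖w‖ = s) :
    ‖z - s * exp (z.arg * I)‖ ≤ ‖z - w‖ := by
  have hdist : ‖z - s * exp (z.arg * I)‖ = |‖z‖ - s| := by
    rw [show z - s * exp (z.arg * I) = ((‖z‖ - s : ℝ) : ℂ) * exp (z.arg * I) by
      rw [ofReal_sub, sub_mul, norm_mul_exp_arg_mul_I]]
    rw [norm_mul, norm_exp_ofReal_mul_I, mul_one, norm_real, Real.norm_eq_abs]
  rw [hdist, ← hw]
  exact abs_norm_sub_norm_le z w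

lemma EuclideanSpace.norm_le_norm_of_forall_norm_apply_le {ι 𝕜 : Type*} [Fintype ι] [RCLike 𝕜]
    {x y : EuclideanSpace 𝕜 ι} (h : ∀ i, ‖x i‖ ≤ ‖y i‖) : ‖x‖ ≤ ‖y‖ := by
  rw [EuclideanSpace.norm_eq, EuclideanSpace.norm_eq]
  gcongr with i
  exact h i

theorem stmt1_general (n : ℕ)
    (F : EuclideanSpace ℂ (Fin n) ≃ₗᵢ[ℂ] EuclideanSpace ℂ (Fin n))
    (d : Fin n → ℝ)
    (R : EuclideanSpace ℂ (Fin n) → EuclideanSpace ℂ (Fin n))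
    (hR : ∀ w, R w = F.symm (WithLp.toLp 2 (fun r =>
      (Real.sqrt (d r) : ℂ) * Complex.exp (((F w r).arg : ℂ) * Complex.I))))
    (v v' : EuclideanSpace ℂ (Fin n)) :
    ‖v - R v‖ ≤ ‖v - R v'‖ := by
  have hFR : ∀ w r, F (R w) r = (Real.sqrt (d r) : ℂ) * exp ((F w r).arg * I) := fun w r => by
    rw [hR w, F.apply_symm_apply]
  have hnorm : ∀ w, ‖v - R w‖ = ‖F v - F (R w)‖ := fun w => by
    rw [← map_sub, F.norm_map]
  rw [hnorm v, hnorm v']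
  refine EuclideanSpace.norm_le_norm_of_forall_norm_apply_le fun r => ?_
  simp only [PiLp.sub_apply, hFR]
  refine norm_sub_mul_exp_arg_le ?_
  rw [norm_mul, norm_exp_ofReal_mul_I, mul_one, norm_real, Real.norm_of_nonneg (Real.sqrt_nonneg _)]

/-- Let `F` be a unitary map of `ℂ^n`, `d : Fin n → ℝ` entrywise nonnegative, and let
`R(w) = F⁻¹ (fun r => √(d r) · exp(i · arg((F w) r)))` be the revised exit-wave map.
Then for all `v v'`, `‖v − R v‖ ≤ ‖v − R v'‖`. -/
theorem stmt1 (n : ℕ)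
    (F : EuclideanSpace ℂ (Fin n) ≃ₗᵢ[ℂ] EuclideanSpace ℂ (Fin n))
    (d : Fin n → ℝ) (hd : ∀ r, 0 ≤ d r)
    (R : EuclideanSpace ℂ (Fin n) → EuclideanSpace ℂ (Fin n))
    (hR : ∀ w, R w = F.symm (WithLp.toLp 2 (fun r =>
      (Real.sqrt (d r) : ℂ) * Complex.exp (((F w r).arg : ℂ) * Complex.I))))
    (v v' : EuclideanSpace ℂ (Fin n)) :
    ‖v - R v‖ ≤ ‖v - R v'‖ :=
  stmt1_general n F d R hR v v'
end

section
/- For every vector v in ℂ^n, ‖v − R(v)‖₂² = ∑_{r} ( |(F v)_r| − √(d_r) )². In words: the exit-wave misfit at v equals the Fourier-magnitude misfit against the measured amplitudes √d. -/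
/-!
The unitary `F` preserves the distance between `v` and `R v`, and `F (R v)` has, in each
coordinate, the same phase as `F v` but modulus `√(d r)`. Two complex numbers with a common
phase are at distance the difference of their moduli, so the squared distance splits
coordinatewise into `(‖F v r‖ - √(d r))²`.
-/

open Complex

theorem Complex.norm_sub_ofReal_mul_exp_arg_mul_I (z : ℂ) (a : ℝ) :
    ‖z - a * exp (arg z * I)‖ = |‖z‖ - a| := by
  nth_rw 1 [← norm_mul_exp_arg_mul_I z]
  rw [← sub_mul, norm_mul, norm_exp_ofReal_mul_I, mul_one, ← ofReal_sub, norm_real,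
    Real.norm_eq_abs]

theorem LinearIsometryEquiv.norm_sub_symm_apply {𝕜 E : Type*} [RCLike 𝕜]
    [SeminormedAddCommGroup E] [NormedSpace 𝕜 E] (F : E ≃ₗᵢ[𝕜] E) (v y : E) :
    ‖v - F.symm y‖ = ‖F v - y‖ := by
  rw [← F.norm_map, map_sub, F.apply_symm_apply]

theorem stmt2_general (n : ℕ)
    (F : EuclideanSpace ℂ (Fin n) ≃ₗᵢ[ℂ] EuclideanSpace ℂ (Fin n))
    (d : Fin n → ℝ)
    (R : EuclideanSpace ℂ (Fin n) → EuclideanSpace ℂ (Fin n))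
    (hR : ∀ w, R w = F.symm (WithLp.toLp 2 (fun r =>
      (Real.sqrt (d r) : ℂ) * Complex.exp (((F w r).arg : ℂ) * Complex.I))))
    (v : EuclideanSpace ℂ (Fin n)) :
    ‖v - R v‖ ^ 2 = ∑ r, (‖F v r‖ - Real.sqrt (d r)) ^ 2 := by
  rw [hR, F.norm_sub_symm_apply, EuclideanSpace.norm_sq_eq]
  refine Finset.sum_congr rfl fun r _ => ?_
  rw [PiLp.sub_apply, PiLp.toLp_apply, norm_sub_ofReal_mul_exp_arg_mul_I, sq_abs]

/-- Let `F` be a unitary map of `ℂ^n`, `d : Fin n → ℝ` entrywise nonnegative, and let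
`R(w) = F⁻¹ (fun r => √(d r) · exp(i · arg((F w) r)))` be the revised exit-wave map.
Then for every `v`, `‖v − R v‖² = ∑ r, (|(F v) r| − √(d r))²`. -/
theorem stmt2 (n : ℕ)
    (F : EuclideanSpace ℂ (Fin n) ≃ₗᵢ[ℂ] EuclideanSpace ℂ (Fin n))
    (d : Fin n → ℝ) (hd : ∀ r, 0 ≤ d r)
    (R : EuclideanSpace ℂ (Fin n) → EuclideanSpace ℂ (Fin n))
    (hR : ∀ w, R w = F.symm (WithLp.toLp 2 (fun r =>
      (Real.sqrt (d r) : ℂ) * Complex.exp (((F w r).arg : ℂ) * Complex.I))))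
    (v : EuclideanSpace ℂ (Fin n)) :
    ‖v - R v‖ ^ 2 = ∑ r, (‖F v r‖ - Real.sqrt (d r)) ^ 2 :=
  stmt2_general n F d R hR v
end

section
/- Let w, X, Y ∈ ℂ satisfy Re((w − X)·conj(w − Y)) ≤ 0, and let d = X + t·(Y − X) for some real t (so d lies on the line through X and Y). Then |w − d| ≤ max( |X − d|, |Y − d| ). -/
/-!
With `m` the midpoint of `[X, Y]`, one has `⟪w - X, w - Y⟫ = ‖w - m‖² - (‖Y - X‖ / 2)²`, so the
hypothesis says `‖w - m‖ ≤ ‖Y - X‖ / 2`. For `d = X + t (Y - X)` the distances from `d` to `X`, `Y`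
and `m` are `|t|`, `|1 - t|` and `|1/2 - t|` times `‖Y - X‖`, and `max |t| |1 - t| = 1/2 + |1/2 - t|`.
Hence the triangle inequality through `m` gives `‖w - d‖ ≤ ‖Y - X‖ / 2 + ‖m - d‖ = max ‖X - d‖ ‖Y - d‖`.
-/

open RealInnerProductSpace

variable {E : Type*}

theorem max_abs_abs_one_sub_eq (t : ℝ) : max |t| |1 - t| = 1 / 2 + |1 / 2 - t| := by
  rcases le_total t (1 / 2) with ht | ht
  · rw [max_eq_right (abs_le_abs (by linarith) (by linarith)), abs_of_nonneg (by linarith),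
      abs_of_nonneg (by linarith : 0 ≤ 1 / 2 - t)]
    ring
  · rw [max_eq_left (abs_le_abs (by linarith) (by linarith)), abs_of_nonneg (by linarith),
      abs_of_nonpos (by linarith : 1 / 2 - t ≤ 0)]
    ring

section Normed
variable [NormedAddCommGroup E] [NormedSpace ℝ E]

theorem midpoint_sub_add_smul_sub (x y : E) (t : ℝ) :
    midpoint ℝ x y - (x + t • (y - x)) = (1 / 2 - t) • (y - x) := by
  rw [midpoint_eq_smul_add, invOf_eq_inv]; module

theorem max_norm_sub_add_smul_sub (x y : E) (t : ℝ) :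
    max ‖x - (x + t • (y - x))‖ ‖y - (x + t • (y - x))‖
      = ‖y - x‖ / 2 + ‖midpoint ℝ x y - (x + t • (y - x))‖ := by
  have hx : x - (x + t • (y - x)) = (-t) • (y - x) := by module
  have hy : y - (x + t • (y - x)) = (1 - t) • (y - x) := by module
  rw [hx, hy, midpoint_sub_add_smul_sub, norm_smul, norm_smul, norm_smul, Real.norm_eq_abs,
    Real.norm_eq_abs, Real.norm_eq_abs, abs_neg, ← max_mul_of_nonneg _ _ (norm_nonneg _),
    max_abs_abs_one_sub_eq]
  ring

end Normed

section Inner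
variable [NormedAddCommGroup E] [InnerProductSpace ℝ E]

theorem real_inner_add_sub_eq_norm_sq_sub_norm_sq (a b : E) :
    ⟪a + b, a - b⟫ = ‖a‖ ^ 2 - ‖b‖ ^ 2 := by
  rw [inner_add_left, inner_sub_right, inner_sub_right, real_inner_comm a b,
    real_inner_self_eq_norm_sq, real_inner_self_eq_norm_sq]
  ring

theorem real_inner_sub_sub_eq (w x y : E) :
    ⟪w - x, w - y⟫ = ‖w - midpoint ℝ x y‖ ^ 2 - (‖y - x‖ / 2) ^ 2 := by
  have hx : w - x = (w - midpoint ℝ x y) + (1 / 2 : ℝ) • (y - x) := by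
    rw [midpoint_eq_smul_add, invOf_eq_inv]; module
  have hy : w - y = (w - midpoint ℝ x y) - (1 / 2 : ℝ) • (y - x) := by
    rw [midpoint_eq_smul_add, invOf_eq_inv]; module
  rw [hx, hy, real_inner_add_sub_eq_norm_sq_sub_norm_sq, norm_smul,
    Real.norm_of_nonneg (by norm_num)]
  ring

theorem norm_sub_midpoint_le_of_real_inner_sub_sub_nonpos {w x y : E} (h : ⟪w - x, w - y⟫ ≤ 0) :
    ‖w - midpoint ℝ x y‖ ≤ ‖y - x‖ / 2 := by
  rw [real_inner_sub_sub_eq, sub_nonpos] at h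
  exact (sq_le_sq₀ (norm_nonneg _) (by positivity)).mp h

theorem norm_sub_add_smul_sub_le_max_of_real_inner_sub_sub_nonpos {w x y : E}
    (h : ⟪w - x, w - y⟫ ≤ 0) (t : ℝ) :
    ‖w - (x + t • (y - x))‖ ≤ max ‖x - (x + t • (y - x))‖ ‖y - (x + t • (y - x))‖ := by
  rw [max_norm_sub_add_smul_sub]
  calc ‖w - (x + t • (y - x))‖
      ≤ ‖w - midpoint ℝ x y‖ + ‖midpoint ℝ x y - (x + t • (y - x))‖ :=
        norm_sub_le_norm_sub_add_norm_sub _ _ _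
    _ ≤ ‖y - x‖ / 2 + ‖midpoint ℝ x y - (x + t • (y - x))‖ := by
        gcongr; exact norm_sub_midpoint_le_of_real_inner_sub_sub_nonpos h

end Inner

/-- If `w` lies in the closed disk with diameter `[X, Y]` and `d = X + t·(Y − X)` lies on the
line through `X` and `Y`, then `|w − d| ≤ max(|X − d|, |Y − d|)`. -/
theorem stmt7 (w X Y : ℂ) (h : ((w - X) * (starRingEnd ℂ) (w - Y)).re ≤ 0)
    (t : ℝ) (d : ℂ) (hd : d = X + (t : ℂ) * (Y - X)) :
    ‖w - d‖ ≤ max ‖X - d‖ ‖Y - d‖ := by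
  rw [← Complex.inner, real_inner_comm] at h
  rw [hd, ← Complex.real_smul]
  exact norm_sub_add_smul_sub_le_max_of_real_inner_sub_sub_nonpos h t
end

section
/- Let d, e ∈ ℂ and let α, β be real numbers with 0 < α ≤ 1 and 0 < β ≤ 1. Set X = d + α·e and Y = d + β·e. Suppose w ∈ ℂ satisfies w² = X·Y, Re(w·conj(X)) ≥ 0, and Re(w·conj(Y)) ≥ 0. Then |w − d| ≤ max(α, β)·|e|. -/
/-! Write `X = s²`, `Y = t²` and `w = s t`; the alignment `0 ≤ Re (w X̄)` becomes `0 ≤ ⟪s, t⟫`.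
Then `(β - α) (w - d) = (t - s) (β s + α t)` and `(β - α) e = (t - s) (s + t)`, so everything
reduces to `‖β s + α t‖ ≤ max α β ‖s + t‖`, which holds after expanding both squares because the
cross term `⟪s, t⟫` is nonnegative. -/

open ComplexConjugate
open scoped RealInnerProductSpace

theorem norm_smul_add_smul_le_max_mul_norm_add {E : Type*} [NormedAddCommGroup E]
    [InnerProductSpace ℝ E] {x y : E} {a b : ℝ} (ha : 0 ≤ a) (hb : 0 ≤ b) (hxy : 0 ≤ ⟪x, y⟫) :
    ‖a • x + b • y‖ ≤ max a b * ‖x + y‖ := by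
  have hma : a ≤ max a b := le_max_left a b
  have hmb : b ≤ max a b := le_max_right a b
  refine le_of_sq_le_sq ?_ (by positivity)
  rw [mul_pow, norm_add_sq_real, norm_add_sq_real, norm_smul, norm_smul, real_inner_smul_left,
    real_inner_smul_right, Real.norm_of_nonneg ha, Real.norm_of_nonneg hb]
  nlinarith [mul_le_mul hma hmb hb (ha.trans hma),
    mul_nonneg (sq_nonneg ‖x‖) (sub_nonneg.2 (pow_le_pow_left₀ ha hma 2)),
    mul_nonneg (sq_nonneg ‖y‖) (sub_nonneg.2 (pow_le_pow_left₀ hb hmb 2))]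

namespace Complex

theorem exists_aligned_sq_roots_of_sq_eq_mul {X Y w : ℂ} (hw : w ^ 2 = X * Y)
    (hX : 0 ≤ (w * conj X).re) :
    ∃ s t : ℂ, s ^ 2 = X ∧ t ^ 2 = Y ∧ s * t = w ∧ 0 ≤ ⟪s, t⟫ := by
  obtain ⟨s, rfl⟩ := IsAlgClosed.exists_pow_nat_eq X two_pos
  rcases eq_or_ne s 0 with rfl | hs
  · obtain ⟨t, rfl⟩ := IsAlgClosed.exists_pow_nat_eq Y two_pos
    have hw0 : w = 0 := pow_eq_zero_iff two_ne_zero |>.1 (by simpa using hw)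
    exact ⟨0, t, rfl, rfl, by simp [hw0], by simp⟩
  refine ⟨s, w / s, rfl, ?_, mul_div_cancel₀ w hs, ?_⟩
  · rw [div_pow, hw, mul_div_cancel_left₀ Y (pow_ne_zero 2 hs)]
  · have hw' : w * conj (s ^ 2) = w / s * conj s * (normSq s : ℂ) := by
      rw [← mul_conj, map_pow]; field_simp
    rw [hw', re_mul_ofReal] at hX
    rw [Complex.inner]
    exact nonneg_of_mul_nonneg_left hX (normSq_pos.2 hs)

theorem eq_of_sq_eq_sq_of_inner_nonneg {s t : ℂ} (h : s ^ 2 = t ^ 2) (hst : 0 ≤ ⟪s, t⟫) :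
    s = t := by
  rcases sq_eq_sq_iff_eq_or_eq_neg.1 h with rfl | rfl
  · rfl
  · rw [inner_neg_left, real_inner_self_eq_norm_sq, neg_nonneg] at hst
    have ht : t = 0 :=
      norm_eq_zero.1 (pow_eq_zero_iff two_ne_zero |>.1 (le_antisymm hst (by positivity)))
    simp [ht]

end Complex

theorem stmt11_general (d e : ℂ) (α β : ℝ) (hα : 0 < α) (hβ : 0 < β)
    (X Y w : ℂ) (hX : X = d + (α : ℂ) * e) (hY : Y = d + (β : ℂ) * e)
    (hw : w ^ 2 = X * Y)
    (h1 : 0 ≤ (w * (starRingEnd ℂ) X).re) :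
    ‖w - d‖ ≤ max α β * ‖e‖ := by
  obtain ⟨s, t, rfl, rfl, rfl, hst⟩ := Complex.exists_aligned_sq_roots_of_sq_eq_mul hw h1
  rcases eq_or_ne α β with rfl | hαβ
  · obtain rfl := Complex.eq_of_sq_eq_sq_of_inner_nonneg (hX.trans hY.symm) hst
    rw [← sq, hX, add_sub_cancel_left, norm_mul, Complex.norm_real, Real.norm_of_nonneg hα.le,
      max_self]
  have hwd : ((β - α : ℝ) : ℂ) * (s * t - d) = (t - s) * (β • s + α • t) := by
    simp only [Complex.real_smul]; push_cast; linear_combination β * hX - α * hY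
  have he : ((β - α : ℝ) : ℂ) * e = (t - s) * (s + t) := by
    push_cast; linear_combination hX - hY
  have hnorm (z : ℂ) : ‖((β - α : ℝ) : ℂ) * z‖ = |β - α| * ‖z‖ := by
    rw [norm_mul, Complex.norm_real, Real.norm_eq_abs]
  refine le_of_mul_le_mul_left ?_ (abs_pos.2 (sub_ne_zero.2 hαβ.symm))
  calc |β - α| * ‖s * t - d‖ = ‖t - s‖ * ‖β • s + α • t‖ := by rw [← hnorm, hwd, norm_mul]
    _ ≤ ‖t - s‖ * (max β α * ‖s + t‖) := by
      gcongr; exact norm_smul_add_smul_le_max_mul_norm_add hβ.le hα.le hst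
    _ = |β - α| * (max α β * ‖e‖) := by
      rw [max_comm, mul_left_comm, ← norm_mul, ← he, hnorm, mul_left_comm]

/-- Core geometric descent lemma: if `X = d + α·e`, `Y = d + β·e` with `0 < α, β ≤ 1`, and
`w` is a square root of `X·Y` phase-aligned with both `X` and `Y`, then
`|w − d| ≤ max(α, β)·|e|`. -/
theorem stmt11 (d e : ℂ) (α β : ℝ) (hα : 0 < α) (hα1 : α ≤ 1) (hβ : 0 < β) (hβ1 : β ≤ 1)
    (X Y w : ℂ) (hX : X = d + (α : ℂ) * e) (hY : Y = d + (β : ℂ) * e)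
    (hw : w ^ 2 = X * Y)
    (h1 : 0 ≤ (w * (starRingEnd ℂ) X).re) (h2 : 0 ≤ (w * (starRingEnd ℂ) Y).re) :
    ‖w - d‖ ≤ max α β * ‖e‖ :=
  stmt11_general d e α β hα hβ X Y w hX hY hw h1
end
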